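/- arXiv:1211.6579 — 2 statements merged into one kernel-verified Lean document; each statement's English description precedes it below -/
import Mathlib

section
/- Let (M, d) be a metric space and G a group acting on M by isometries with compact orbits, and let d̃ be the induced metric on M/G given by d̃(Gx, Gy) = inf { d(x, gy) : g ∈ G }. Then (M/G, d̃) is complete if and only if (M, d) is complete. -/
/-!
The quotient map `π : M → M/G` is a submetry: it is `1`-Lipschitz, and since compact orbits make
the infimum defining `d̃` a minimum, every `x` has a point of any given orbit at distance
exactly `d̃(π x, ·)`. Completeness passes down a submetry by lifting a rapidly converging
sequence step by step to `M`. It passes up when the fibres are compact: for a Cauchy sequence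
`uₙ` in `M` with `π uₙ → π y`, points `wₙ` of the orbit of `y` with `d(uₙ, wₙ) ≤ d̃(π uₙ, π y)`
have a convergent subsequence, so `uₙ` has a cluster point.
-/

open Filter Topology MulAction

/-- Equivalently, `π` maps every closed ball `closedBall x r` onto `closedBall (π x) r`. -/
structure IsSubmetry {M Q : Type*} [PseudoMetricSpace M] [PseudoMetricSpace Q] (π : M → Q) :
    Prop where
  surjective : Function.Surjective π
  lipschitzWith : LipschitzWith 1 π
  exists_lift : ∀ (x : M) (q : Q), ∃ y, π y = q ∧ dist x y ≤ dist (π x) q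

namespace IsSubmetry

variable {M Q : Type*} [PseudoMetricSpace M] [PseudoMetricSpace Q] {π : M → Q}

theorem exists_lift_seq (hπ : IsSubmetry π) (u : ℕ → Q) :
    ∃ v : ℕ → M, π ∘ v = u ∧
      ∀ n, dist (v n) (v (n + 1)) ≤ dist (u n) (u (n + 1)) := by
  choose lift hlift_mk hlift_dist using hπ.exists_lift
  let v : ℕ → M := fun n =>
    Nat.rec (Function.surjInv hπ.surjective (u 0)) (fun k vk => lift vk (u (k + 1))) n
  have hv : ∀ n, π (v n) = u n := by
    intro n
    cases n with
    | zero => exact Function.surjInv_eq hπ.surjective _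
    | succ k => exact hlift_mk _ _
  refine ⟨v, funext hv, fun n => ?_⟩
  simpa only [hv n] using hlift_dist (v n) (u (n + 1))

theorem completeSpace (hπ : IsSubmetry π) [CompleteSpace M] : CompleteSpace Q := by
  refine Metric.complete_of_convergent_controlled_sequences (fun n => (1 / 2 : ℝ) ^ n)
    (fun n => by positivity) fun u hu => ?_
  obtain ⟨v, hvu, hv⟩ := hπ.exists_lift_seq u
  have hv_cauchy : CauchySeq v := cauchySeq_of_le_geometric (1 / 2) 1 (by norm_num) fun n =>
    (hv n).trans (by simpa only [one_mul] using (hu n n (n + 1) le_rfl n.le_succ).le)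
  obtain ⟨x, hx⟩ := cauchySeq_tendsto_of_complete hv_cauchy
  exact ⟨π x, hvu ▸ (hπ.lipschitzWith.continuous.tendsto x).comp hx⟩

theorem completeSpace_of_isCompact_fiber (hπ : IsSubmetry π) [CompleteSpace Q]
    (hfiber : ∀ q, IsCompact (π ⁻¹' {q})) : CompleteSpace M := by
  refine Metric.complete_of_cauchySeq_tendsto fun u hu => ?_
  obtain ⟨q, hq⟩ :=
    cauchySeq_tendsto_of_complete (hπ.lipschitzWith.uniformContinuous.comp_cauchySeq hu)
  choose w hw_mk hw_dist using fun n => hπ.exists_lift (u n) q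
  have huw : Tendsto (fun n => dist (w n) (u n)) atTop (𝓝 0) :=
    squeeze_zero (fun _ => dist_nonneg) (fun n => (dist_comm _ _).trans_le (hw_dist n))
      (tendsto_iff_dist_tendsto_zero.1 hq)
  obtain ⟨z, -, φ, hφ, hwφ⟩ := (hfiber q).tendsto_subseq hw_mk
  exact ⟨z, tendsto_nhds_of_cauchySeq_of_subseq hu hφ.tendsto_atTop
    (hwφ.congr_dist (huw.comp hφ.tendsto_atTop))⟩

end IsSubmetry

section OrbitQuotient

variable {G M : Type*} [Group G] [PseudoMetricSpace M] [MulAction G M]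

theorem exists_isLeast_dist_smul {y : M} (hy : IsCompact (orbit G y)) (x : M) :
    ∃ g : G, IsLeast {r : ℝ | ∃ g : G, r = dist x (g • y)} (dist x (g • y)) := by
  obtain ⟨_, ⟨g, rfl⟩, hmin⟩ :=
    hy.exists_isMinOn ⟨y, mem_orbit_self y⟩ (continuous_const.dist continuous_id).continuousOn
  exact ⟨g, ⟨g, rfl⟩, by rintro _ ⟨h, rfl⟩; exact hmin ⟨h, rfl⟩⟩

theorem isSubmetry_quotient_mk [PseudoMetricSpace (Quotient (orbitRel G M))]
    (hcpt : ∀ x : M, IsCompact (orbit G x))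
    (hd : ∀ x y : M, dist (Quotient.mk (orbitRel G M) x) (Quotient.mk (orbitRel G M) y)
      = sInf {r : ℝ | ∃ g : G, r = dist x (g • y)}) :
    IsSubmetry (Quotient.mk (orbitRel G M)) := by
  have hleast (x y : M) : IsLeast {r : ℝ | ∃ g : G, r = dist x (g • y)}
      (dist (Quotient.mk (orbitRel G M) x) (Quotient.mk (orbitRel G M) y)) := by
    obtain ⟨g, hg⟩ := exists_isLeast_dist_smul (hcpt y) x
    rwa [hd, hg.csInf_eq]
  refine ⟨Quotient.mk_surjective, LipschitzWith.mk_one fun x y => ?_, fun x q => ?_⟩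
  · exact (hleast x y).2 ⟨1, by rw [one_smul]⟩
  · induction q using Quotient.inductionOn with
    | h y =>
      obtain ⟨g, hg⟩ := (hleast x y).1
      exact ⟨g • y, Quotient.sound (mem_orbit y g), hg.ge⟩

theorem isCompact_preimage_quotient_mk (hcpt : ∀ x : M, IsCompact (orbit G x))
    (q : Quotient (orbitRel G M)) : IsCompact (Quotient.mk (orbitRel G M) ⁻¹' {q}) := by
  induction q using Quotient.inductionOn with
  | h y =>
    convert hcpt y using 1
    ext x
    exact Quotient.eq.trans orbitRel_apply

end OrbitQuotient

theorem quotient_complete_iff_complete_general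
    (G : Type*) [Group G] (M : Type*) [MetricSpace M] [MulAction G M]
    (hcpt : ∀ x : M, IsCompact (MulAction.orbit G x)) :
    ∀ m : MetricSpace (Quotient (MulAction.orbitRel G M)),
      (∀ x y : M,
        @dist _ m.toDist (Quotient.mk (MulAction.orbitRel G M) x)
            (Quotient.mk (MulAction.orbitRel G M) y)
          = sInf { r : ℝ | ∃ g : G, r = dist x (g • y) }) →
      (@CompleteSpace _ m.toUniformSpace ↔ CompleteSpace M) := by
  intro m hd
  let := m
  have hπ := isSubmetry_quotient_mk hcpt hd
  exact ⟨fun _ => hπ.completeSpace_of_isCompact_fiber (isCompact_preimage_quotient_mk hcpt),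
    fun _ => hπ.completeSpace⟩

/-- If a group `G` acts by isometries on a metric space `(M, d)` with
compact orbits and `d̃(Gx,Gy) = inf { d(x, gy) : g ∈ G }` is the induced metric on `M/G`,
then `(M/G, d̃)` is complete if and only if `(M, d)` is complete. -/
theorem quotient_complete_iff_complete
    (G : Type*) [Group G] (M : Type*) [MetricSpace M] [MulAction G M]
    (hiso : ∀ (g : G) (x y : M), dist (g • x) (g • y) = dist x y)
    (hcpt : ∀ x : M, IsCompact (MulAction.orbit G x)) :
    ∀ m : MetricSpace (Quotient (MulAction.orbitRel G M)),
      (∀ x y : M,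
        @dist _ m.toDist (Quotient.mk (MulAction.orbitRel G M) x)
            (Quotient.mk (MulAction.orbitRel G M) y)
          = sInf { r : ℝ | ∃ g : G, r = dist x (g • y) }) →
      (@CompleteSpace _ m.toUniformSpace ↔ CompleteSpace M) :=
  quotient_complete_iff_complete_general G M hcpt
end

section
/- Let X be a locally compact length space. Then the metric on X is complete if and only if every closed metric ball in X is compact. -/
/-- A metric space is a length space if the distance between any two points is the
infimum of the lengths (total variations) of continuous paths joining them. -/
def IsLengthSpace (X : Type*) [MetricSpace X] : Prop :=
  ∀ x y : X,
    ENNReal.ofReal (dist x y) =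
      ⨅ γ : Path x y, eVariationOn (fun t : unitInterval => γ t) Set.univ

/-!
Fix `x`. The radii `r` for which `closedBall x r` is compact form an initial segment of `ℝ`
containing `0`. In a length space the ball of radius `ρ + ε` lies in the `ε`-thickening of the
closed ball of radius `ρ`. Hence if all balls of radius `r < R` are compact, `closedBall x R` is
totally bounded, so compact by completeness; and if `closedBall x R` is compact, local
compactness gives it a compact `δ`-thickening, which contains `closedBall x (R + δ / 2)`. So the
segment is all of `ℝ`. The reverse implication holds in every proper space.
-/

open Metric Set

theorem eVariationOn.edist_add_edist_le {α E : Type*} [LinearOrder α] [PseudoEMetricSpace E]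
    (f : α → E) {s : Set α} {a b c : α} (ha : a ∈ s) (hb : b ∈ s) (hc : c ∈ s)
    (hab : a ≤ b) (hbc : b ≤ c) :
    edist (f a) (f b) + edist (f b) (f c) ≤ eVariationOn f s :=
  calc edist (f a) (f b) + edist (f b) (f c)
      ≤ eVariationOn f (s ∩ Icc a b) + eVariationOn f (s ∩ Icc b c) :=
        add_le_add (edist_le f ⟨ha, le_rfl, hab⟩ ⟨hb, hab, le_rfl⟩)
          (edist_le f ⟨hb, le_rfl, hbc⟩ ⟨hc, hbc, le_rfl⟩)
    _ = eVariationOn f (s ∩ Icc a c) := Icc_add_Icc f hab hbc hb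
    _ ≤ eVariationOn f s := mono f inter_subset_left

theorem Path.edist_add_edist_le_eVariationOn {X : Type*} [PseudoEMetricSpace X] {x y : X}
    (γ : Path x y) (t : unitInterval) :
    edist x (γ t) + edist (γ t) y ≤ eVariationOn (fun s : unitInterval => γ s) univ := by
  simpa using eVariationOn.edist_add_edist_le (fun s : unitInterval => γ s)
    (mem_univ 0) (mem_univ t) (mem_univ 1) unitInterval.nonneg' unitInterval.le_one'

theorem Metric.totallyBounded_of_forall_subset_thickening {X : Type*} [PseudoMetricSpace X]
    {s : Set X} (h : ∀ ε > 0, ∃ t, TotallyBounded t ∧ s ⊆ thickening ε t) :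
    TotallyBounded s := by
  refine Metric.totallyBounded_iff.2 fun ε hε => ?_
  obtain ⟨t, ht, hst⟩ := h (ε / 2) (half_pos hε)
  obtain ⟨F, hF, htF⟩ := Metric.totallyBounded_iff.1 ht (ε / 2) (half_pos hε)
  refine ⟨F, hF, ?_⟩
  calc s ⊆ thickening (ε / 2) (⋃ y ∈ F, ball y (ε / 2)) :=
        hst.trans (thickening_subset_of_subset _ htF)
    _ = ⋃ y ∈ F, thickening (ε / 2) (ball y (ε / 2)) := thickening_biUnion _ _ _
    _ ⊆ ⋃ y ∈ F, ball y ε := iUnion₂_mono fun y _ => by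
      simpa only [add_halves] using thickening_ball y (ε / 2) (ε / 2)

theorem IsLowerSet.eq_univ_of_forall_Iio_subset_of_forall_exists_gt {S : Set ℝ}
    (hS : IsLowerSet S) (h0 : 0 ∈ S) (hclosed : ∀ R > 0, Iio R ⊆ S → R ∈ S)
    (hopen : ∀ R ∈ S, 0 ≤ R → ∃ R' > R, R' ∈ S) : S = univ := by
  by_contra hne
  obtain ⟨b, hb⟩ := (ne_univ_iff_exists_notMem S).1 hne
  have hbdd : BddAbove S := ⟨b, fun s hs => le_of_not_ge fun hbs => hb (hS hbs hs)⟩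
  have hR0 : 0 ≤ sSup S := le_csSup hbdd h0
  have hIio : Iio (sSup S) ⊆ S := fun r hr =>
    let ⟨s, hs, hrs⟩ := exists_lt_of_lt_csSup ⟨0, h0⟩ hr
    hS hrs.le hs
  have hR : sSup S ∈ S := hR0.eq_or_lt.elim (fun h => h ▸ h0) fun h => hclosed _ h hIio
  obtain ⟨R', hR', hR'S⟩ := hopen _ hR hR0
  exact (le_csSup hbdd hR'S).not_gt hR'

namespace IsLengthSpace

variable {X : Type*} [MetricSpace X]

theorem exists_dist_eq_and_dist_lt (h : IsLengthSpace X) {x y : X} {r ε : ℝ}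
    (hr₀ : 0 ≤ r) (hr : r ≤ dist x y) (hε : 0 < ε) :
    ∃ z, dist x z = r ∧ dist z y < dist x y - r + ε := by
  obtain ⟨γ, hγ⟩ : ∃ γ : Path x y,
      eVariationOn (fun t : unitInterval => γ t) univ < ENNReal.ofReal (dist x y + ε) := by
    rw [← iInf_lt_iff, ← h x y]
    exact (ENNReal.ofReal_lt_ofReal_iff (by positivity)).2 (by linarith)
  obtain ⟨t, ht⟩ : ∃ t : unitInterval, dist x (γ t) = r :=
    intermediate_value_univ 0 1 (continuous_const.dist γ.continuous)
      (by simpa using ⟨hr₀, hr⟩)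
  refine ⟨γ t, ht, ?_⟩
  have hlen := (γ.edist_add_edist_le_eVariationOn t).trans_lt hγ
  rw [edist_dist, edist_dist, ← ENNReal.ofReal_add dist_nonneg dist_nonneg,
    ENNReal.ofReal_lt_ofReal_iff (by positivity)] at hlen
  linarith

theorem ball_subset_thickening_closedBall (h : IsLengthSpace X) (x : X) {ρ ε : ℝ}
    (hρ : 0 ≤ ρ) (hε : 0 < ε) : ball x (ρ + ε) ⊆ thickening ε (closedBall x ρ) := by
  intro w hw
  rw [mem_ball'] at hw
  rcases le_or_gt (dist x w) ρ with hwρ | hρw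
  · exact self_subset_thickening hε _ (mem_closedBall'.2 hwρ)
  · obtain ⟨z, hxz, hzw⟩ := h.exists_dist_eq_and_dist_lt hρ hρw.le (sub_pos.2 hw)
    exact mem_thickening_iff.2 ⟨z, mem_closedBall'.2 hxz.le, by rw [dist_comm]; linarith⟩

theorem isCompact_closedBall_of_forall_lt [CompleteSpace X] (h : IsLengthSpace X) (x : X)
    {R : ℝ} (hR : 0 < R) (hlt : ∀ r < R, IsCompact (closedBall x r)) :
    IsCompact (closedBall x R) := by
  refine (totallyBounded_of_forall_subset_thickening fun ε hε => ?_).isCompact_of_isClosed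
    isClosed_closedBall
  obtain ⟨δ, hδ, hδR, hδε⟩ : ∃ δ, 0 < δ ∧ δ < R ∧ δ < ε :=
    ⟨min R ε / 2, by positivity, by linarith [min_le_left R ε],
      by linarith [min_le_right R ε]⟩
  refine ⟨closedBall x (R - δ), (hlt _ (by linarith)).totallyBounded, ?_⟩
  calc closedBall x R ⊆ ball x (R - δ + ε) := closedBall_subset_ball (by linarith)
    _ ⊆ _ := h.ball_subset_thickening_closedBall x (by linarith) hε

theorem exists_gt_isCompact_closedBall [LocallyCompactSpace X] (h : IsLengthSpace X) (x : X)
    {R : ℝ} (hR : 0 ≤ R) (hc : IsCompact (closedBall x R)) :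
    ∃ R' > R, IsCompact (closedBall x R') := by
  obtain ⟨δ, hδ, hδc⟩ := hc.exists_isCompact_cthickening
  refine ⟨R + δ / 2, by linarith, hδc.of_isClosed_subset isClosed_closedBall ?_⟩
  calc closedBall x (R + δ / 2) ⊆ ball x (R + δ) := closedBall_subset_ball (by linarith)
    _ ⊆ thickening δ (closedBall x R) := h.ball_subset_thickening_closedBall x hR hδ
    _ ⊆ cthickening δ (closedBall x R) := thickening_subset_cthickening _ _

end IsLengthSpace

/-- (Hopf–Rinow–Cohn-Vossen) A locally compact length space is complete
if and only if every closed metric ball is compact. -/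
theorem lengthSpace_complete_iff_closedBall_compact
    (X : Type*) [MetricSpace X] [LocallyCompactSpace X]
    (h : IsLengthSpace X) :
    CompleteSpace X ↔ ∀ (x : X) (r : ℝ), IsCompact (Metric.closedBall x r) := by
  refine ⟨fun _ x => ?_, fun H => by have : ProperSpace X := ⟨H⟩; infer_instance⟩
  have hlower : IsLowerSet {r | IsCompact (closedBall x r)} := fun _ _ hsr hr =>
    hr.of_isClosed_subset isClosed_closedBall (closedBall_subset_closedBall hsr)
  have hall := hlower.eq_univ_of_forall_Iio_subset_of_forall_exists_gt (by simp)
    (fun R hR hlt => h.isCompact_closedBall_of_forall_lt x hR hlt)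
    (fun R hR hR0 => h.exists_gt_isCompact_closedBall x hR0 hR)
  exact fun r => eq_univ_iff_forall.1 hall r
end
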